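/- arXiv:2511.09320 — 10 statements merged into one kernel-verified Lean document; each statement's English description precedes it below -/
import Mathlib

section
/- A set X ⊆ [ω]^ω is κ-unbounded (i.e., |X| ≥ κ and for each b ∈ ω^ω there is A ⊆ X with |A| < κ such that b(n) < x(n) for infinitely many n, for all x ∈ X∖A) if and only if the set X ∪ Fin is κ-concentrated on Fin, i.e., for every open set U ⊆ P(ω) containing Fin, |X ∖ U| < κ. -/
open Cardinal Set

/-!
Write `x(n)` for the `n`-th element of an infinite `x ⊆ ω`; then `n < |x ∩ m|` iff `x(n) < m`.
Consequently a closed set of infinite sets (such as the complement of an open `U ⊇ Fin`) is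
compact and hence everywhere dominated by a single `c : ℕ → ℕ`, so unboundedness makes `X ∖ U`
small. Conversely, the sets `x` with `x(n) ≤ b(n)` for all `n ≥ k` form a closed set missing
`Fin`, so their union over `k` meets `X` in fewer than `κ` points, because `κ` has uncountable
cofinality.
-/

/-- The finite subsets of ω, as a subset of Cantor space `ℕ → Bool`. -/
def FinS : Set (ℕ → Bool) := {x | {n | x n = true}.Finite}

def IsConcentratedOn {α : Type*} [TopologicalSpace α] (κ : Cardinal) (Y D : Set α) : Prop :=
  κ ≤ #Y ∧ ∀ U : Set α, IsOpen U → D ⊆ U → #(Y \ U : Set α) < κ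

def IsUnbounded (κ : Cardinal) (X : Set (ℕ → Bool)) : Prop :=
  κ ≤ #X ∧ ∀ b : ℕ → ℕ, ∃ A ⊆ X, #A < κ ∧
    ∀ x ∈ X \ A, {n | b n < Nat.nth (fun k => x k = true) n}.Infinite

theorem finS_countable : FinS.Countable := by
  refine Set.Countable.ofPred_finite.preimage (f := fun x : ℕ → Bool => {n | x n = true}) ?_
  intro x y hxy
  funext n
  simpa using congrArg (n ∈ ·) hxy

theorem le_mk_of_le_mk_union_countable {α : Type*} {κ : Cardinal} (hκ : ℵ₀ < κ)
    {X S : Set α} (hS : S.Countable) (h : κ ≤ #(X ∪ S : Set α)) : κ ≤ #X := by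
  by_contra! hX
  exact h.not_gt <| (mk_union_le X S).trans_lt <|
    add_lt_of_lt hκ.le hX (hS.le_aleph0.trans_lt hκ)

theorem mk_iUnion_nat_lt_of_aleph0_lt_cof {α : Type*} {κ : Cardinal} (hκ : ℵ₀ < κ.ord.cof)
    {t : ℕ → Set α} (ht : ∀ n, #(t n) < κ) : #(⋃ n, t n) < κ := by
  have hle : #(⋃ n, t n) ≤ ℵ₀ * ⨆ n, #(t n) := by simpa using mk_iUnion_le_lift t
  have hκ₀ : ℵ₀ < κ := hκ.trans_le (Ordinal.cof_ord_le κ)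
  exact hle.trans_lt <| mul_lt_of_lt hκ₀.le hκ₀ (lift_iSup_lt_of_lt_cof_ord (by simpa using hκ) ht)

theorem continuous_count_true (m : ℕ) :
    Continuous fun y : ℕ → Bool => Nat.count (fun i => y i = true) m := by
  induction m with
  | zero => simp only [Nat.count_zero]; exact continuous_const
  | succ m ih =>
    simp only [Nat.count_succ]
    have hbit : Continuous fun b : Bool => if b = true then 1 else 0 :=
      continuous_of_discreteTopology
    exact ih.add (hbit.comp (continuous_apply m))

theorem exists_forall_nth_lt_of_isClosed {K : Set (ℕ → Bool)} (hK : IsClosed K)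
    (hinf : ∀ x ∈ K, {n | x n = true}.Infinite) :
    ∃ c : ℕ → ℕ, ∀ x ∈ K, ∀ k, Nat.nth (fun n => x n = true) k < c k := by
  have hcover : ∀ k, ∃ m, K ⊆ {y | k < Nat.count (fun i => y i = true) m} := by
    intro k
    refine hK.isCompact.elim_directed_cover _
      (fun m => (isOpen_discrete _).preimage (continuous_count_true m)) (fun x hx => ?_) ?_
    · exact mem_iUnion.2 ⟨Nat.nth (fun n => x n = true) k + 1,
        (Nat.lt_nth_iff_count_lt (hinf x hx)).2 (Nat.lt_succ_self _)⟩
    · exact Monotone.directed_le fun a b hab y hy => hy.trans_le (Nat.count_monotone _ hab)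
  choose c hc using hcover
  exact ⟨c, fun x hx k => (Nat.lt_nth_iff_count_lt (hinf x hx)).1 (hc k hx)⟩

/-- For infinite `y` this says `nth y n ≤ b n` for all `n ≥ k`; phrased through `count`, it is
closed in the whole Cantor space and contains no finite set. -/
def boundedFrom (b : ℕ → ℕ) (k : ℕ) : Set (ℕ → Bool) :=
  {y | ∀ n ≥ k, n < Nat.count (fun i => y i = true) (b n + 1)}

theorem isClosed_boundedFrom (b : ℕ → ℕ) (k : ℕ) : IsClosed (boundedFrom b k) := by
  simp only [boundedFrom, ofPred_forall]
  exact isClosed_iInter fun n => isClosed_iInter fun _ =>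
    (isClosed_discrete _).preimage (continuous_count_true _)

theorem finS_subset_compl_boundedFrom (b : ℕ → ℕ) (k : ℕ) : FinS ⊆ (boundedFrom b k)ᶜ := by
  intro y hy hyb
  have := hyb (max k hy.toFinset.card) (le_max_left _ _)
  exact this.not_ge ((Nat.count_le_card hy _).trans (le_max_right _ _))

theorem exists_mem_boundedFrom {b : ℕ → ℕ} {x : ℕ → Bool} (hx : {n | x n = true}.Infinite)
    (hfin : {n | b n < Nat.nth (fun i => x i = true) n}.Finite) : ∃ k, x ∈ boundedFrom b k := by
  obtain ⟨k, hk⟩ := hfin.bddAbove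
  refine ⟨k + 1, fun n hn => (Nat.lt_nth_iff_count_lt hx).2 (Nat.lt_succ_of_le ?_)⟩
  by_contra! h
  have := hk h
  omega

theorem IsUnbounded.isConcentratedOn_union_finS {κ : Cardinal} {X : Set (ℕ → Bool)}
    (h : IsUnbounded κ X) : IsConcentratedOn κ (X ∪ FinS) FinS := by
  obtain ⟨hκX, hunb⟩ := h
  refine ⟨hκX.trans (mk_le_mk_of_subset subset_union_left), fun U hU hFinU => ?_⟩
  obtain ⟨c, hc⟩ := exists_forall_nth_lt_of_isClosed hU.isClosed_compl
    fun x hxU hfin => hxU (hFinU hfin)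
  obtain ⟨A, -, hAκ, hA⟩ := hunb c
  refine (mk_le_mk_of_subset ?_).trans_lt hAκ
  rintro x ⟨hx, hxU⟩
  have hxX : x ∈ X := hx.resolve_right fun hx => hxU (hFinU hx)
  by_contra hxA
  obtain ⟨n, hn⟩ := (hA x ⟨hxX, hxA⟩).nonempty
  exact (hc x hxU n).not_gt hn

theorem IsConcentratedOn.isUnbounded {κ : Cardinal} (hκ : ℵ₀ < κ.ord.cof) {X : Set (ℕ → Bool)}
    (hX : ∀ x ∈ X, {n | x n = true}.Infinite) (h : IsConcentratedOn κ (X ∪ FinS) FinS) :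
    IsUnbounded κ X := by
  obtain ⟨hκXF, hconc⟩ := h
  refine ⟨le_mk_of_le_mk_union_countable (hκ.trans_le (Ordinal.cof_ord_le κ)) finS_countable hκXF,
    fun b => ⟨X ∩ ⋃ k, boundedFrom b k, inter_subset_left, ?_, ?_⟩⟩
  · have hsub : X ∩ ⋃ k, boundedFrom b k ⊆ ⋃ k, (X ∪ FinS) \ (boundedFrom b k)ᶜ := by
      rintro x ⟨hxX, hxb⟩
      obtain ⟨k, hk⟩ := mem_iUnion.1 hxb
      exact mem_iUnion.2 ⟨k, Or.inl hxX, not_not.2 hk⟩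
    exact (mk_le_mk_of_subset hsub).trans_lt <| mk_iUnion_nat_lt_of_aleph0_lt_cof hκ fun k =>
      hconc _ (isClosed_boundedFrom b k).isOpen_compl (finS_subset_compl_boundedFrom b k)
  · rintro x ⟨hxX, hxA⟩ hfin
    obtain ⟨k, hk⟩ := exists_mem_boundedFrom (hX x hxX) hfin
    exact hxA ⟨hxX, mem_iUnion.2 ⟨k, hk⟩⟩

/-- A set `X ⊆ [ω]^ω` is κ-unbounded iff `X ∪ Fin` is κ-concentrated
on `Fin`, for κ of uncountable cofinality. -/
theorem stmt0 (κ : Cardinal) (hκ : Cardinal.aleph0 < κ.ord.cof)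
    (X : Set (ℕ → Bool)) (hX : ∀ x ∈ X, {n | x n = true}.Infinite) :
    (κ ≤ Cardinal.mk X ∧
      ∀ b : ℕ → ℕ, ∃ A ⊆ X, Cardinal.mk A < κ ∧
        ∀ x ∈ X \ A, {n | b n < Nat.nth (fun k => x k = true) n}.Infinite)
    ↔
    (κ ≤ Cardinal.mk ↥(X ∪ FinS) ∧
      ∀ U : Set (ℕ → Bool), IsOpen U → FinS ⊆ U →
        Cardinal.mk ↥((X ∪ FinS) \ U) < κ) :=
  ⟨IsUnbounded.isConcentratedOn_union_finS, IsConcentratedOn.isUnbounded hκ hX⟩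
end

section
/- If X ⊆ [ω]^ω is a base for a free ultrafilter U on ω and A ⊆ X has cardinality strictly less than 𝔲 (the minimal cardinality of an ultrafilter base), then X ∖ A is also a base for U. -/
open Set Cardinal

/-- `X` is a base for the semifilter `S`: `S` consists precisely of the infinite sets
almost containing some member of `X`. -/
def IsBaseForSemifilter (X : Set (Set ℕ)) (S : Set (Set ℕ)) : Prop :=
  S = {b : Set ℕ | b.Infinite ∧ ∃ a ∈ X, (a \ b).Finite}

/-- The ultrafilter number 𝔲: the least cardinality of a base of some free
ultrafilter on ω. -/
noncomputable def uNumber : Cardinal :=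
  sInf {c | ∃ (U : Ultrafilter ℕ) (B : Set (Set ℕ)),
    (↑U : Filter ℕ) ≤ Filter.cofinite ∧
    IsBaseForSemifilter B {s : Set ℕ | s.Infinite ∧ s ∈ U} ∧
    c = Cardinal.mk B}

lemma mem_infinite (U : Ultrafilter ℕ) (hU : (↑U : Filter ℕ) ≤ Filter.cofinite)
    {u : Set ℕ} (hu : u ∈ U) : u.Infinite := by
  by_contra h
  rw [Set.not_infinite] at h
  have hc : uᶜ ∈ U := hU (by simpa [Filter.mem_cofinite] using h)
  have : (u ∩ uᶜ : Set ℕ) ∈ U := Filter.inter_mem hu hc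
  simp only [Set.inter_compl_self] at this
  exact Ultrafilter.empty_notMem this

/-- if `X` is a base for a free ultrafilter `U` and `|A| < 𝔲`,
then `X ∖ A` is still a base for `U`. -/
theorem stmt2 (U : Ultrafilter ℕ) (hU : (↑U : Filter ℕ) ≤ Filter.cofinite)
    (X : Set (Set ℕ)) (hX : ∀ x ∈ X, x.Infinite)
    (hbase : IsBaseForSemifilter X {s : Set ℕ | s.Infinite ∧ s ∈ U})
    (A : Set (Set ℕ)) (hA : A ⊆ X) (hcard : Cardinal.mk A < uNumber) :
    IsBaseForSemifilter (X \ A) {s : Set ℕ | s.Infinite ∧ s ∈ U} := by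
  unfold IsBaseForSemifilter at *
  ext s
  simp only [Set.mem_setOf_eq]
  constructor
  · rintro ⟨hsinf, hsU⟩
    refine ⟨hsinf, ?_⟩
    by_contra hno
    push_neg at hno
    -- A' : elements of A almost contained in s
    set A' : Set (Set ℕ) := {a ∈ A | (a \ s).Finite} with hA'def
    have hbase' : {t : Set ℕ | t.Infinite ∧ t ∈ U} =
        {b : Set ℕ | b.Infinite ∧ ∃ a ∈ A', (a \ b).Finite} := by
      ext t
      simp only [Set.mem_setOf_eq]
      constructor
      · rintro ⟨htinf, htU⟩
        refine ⟨htinf, ?_⟩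
        have hts : (t ∩ s : Set ℕ) ∈ U := Filter.inter_mem htU hsU
        have htsinf : (t ∩ s : Set ℕ).Infinite := mem_infinite U hU hts
        have : (t ∩ s) ∈ {b : Set ℕ | b.Infinite ∧ ∃ a ∈ X, (a \ b).Finite} := by
          rw [← hbase]; exact ⟨htsinf, hts⟩
        obtain ⟨-, a, haX, hafin⟩ := this
        have has : (a \ s).Finite :=
          hafin.subset (fun x hx => ⟨hx.1, fun h => hx.2 h.2⟩)
        have haA : a ∈ A := by
          by_contra haA
          exact hno a ⟨haX, haA⟩ has
        exact ⟨a, ⟨haA, has⟩, hafin.subset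
          (fun x hx => ⟨hx.1, fun h => hx.2 h.1⟩)⟩
      · rintro ⟨htinf, a, ⟨haA, -⟩, hafin⟩
        have : t ∈ {b : Set ℕ | b.Infinite ∧ ∃ a ∈ X, (a \ b).Finite} :=
          ⟨htinf, a, hA haA, hafin⟩
        rw [← hbase] at this
        exact this
    have hmem : Cardinal.mk A' ∈ {c | ∃ (V : Ultrafilter ℕ) (B : Set (Set ℕ)),
        (↑V : Filter ℕ) ≤ Filter.cofinite ∧
        IsBaseForSemifilter B {s : Set ℕ | s.Infinite ∧ s ∈ V} ∧
        c = Cardinal.mk B} := ⟨U, A', hU, hbase', rfl⟩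
    have h1 : uNumber ≤ Cardinal.mk A' := csInf_le' hmem
    have h2 : Cardinal.mk A' ≤ Cardinal.mk A :=
      Cardinal.mk_le_mk_of_subset (fun a ha => ha.1)
    exact absurd hcard (not_lt.mpr (h1.trans h2))
  · rintro ⟨hsinf, a, haXA, hafin⟩
    have : s ∈ {b : Set ℕ | b.Infinite ∧ ∃ a ∈ X, (a \ b).Finite} :=
      ⟨hsinf, a, haXA.1, hafin⟩
    rw [← hbase] at this
    exact this
end

section
/- If X ⊆ [ω]^ω is a base for the full semifilter [ω]^ω and A ⊆ X has cardinality strictly less than the continuum 𝔠, then X ∖ A is also a base for [ω]^ω. -/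
open Set Cardinal

universe u

/-!
Inside an infinite `u` there are `𝔠` many infinite sets `v r` with pairwise finite intersections
(the branches of the binary tree, copied into `u`). Choose `g r ∈ X` almost contained in `v r`.
An infinite set cannot be almost contained in two almost disjoint sets, so `g` is injective;
since `|A| < 𝔠`, some `g r` lies outside `A`, and it is almost contained in `v r ⊆ u`.
-/

def prefixes (r : ℕ → Bool) : Set (List Bool) :=
  range fun k => (List.range k).map r

lemma prefixes_infinite (r : ℕ → Bool) : (prefixes r).Infinite :=
  infinite_range_of_injective fun a b h => by simpa using congrArg List.length h

lemma finite_prefixes_inter_prefixes {r s : ℕ → Bool} (hrs : r ≠ s) :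
    (prefixes r ∩ prefixes s).Finite := by
  obtain ⟨n, hn⟩ := Function.ne_iff.mp hrs
  refine ((finite_Iic n).image fun k => (List.range k).map r).subset ?_
  rintro _ ⟨⟨k, rfl⟩, ⟨m, hmk⟩⟩
  obtain rfl : m = k := by simpa using congrArg List.length hmk
  refine ⟨m, mem_Iic.mpr <| not_lt.mp fun hnm => hn ?_, rfl⟩
  simpa [hnm] using congrArg (·[n]?) hmk.symm

theorem Set.Infinite.exists_almostDisjoint_family {α : Type*} {u : Set α} (hu : u.Infinite) :
    ∃ v : (ℕ → Bool) → Set α, (∀ r, v r ⊆ u) ∧ (∀ r, (v r).Infinite) ∧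
      Pairwise fun r s => (v r ∩ v s).Finite := by
  let e := Set.Infinite.natEmbedding u hu
  let f : List Bool → α := fun l => e (Encodable.encode l)
  have hf : f.Injective := Subtype.val_injective.comp <|
    e.injective.comp Encodable.encode_injective
  refine ⟨fun r => f '' prefixes r, ?_, fun r => (prefixes_infinite r).image hf.injOn,
    fun r s hrs => ?_⟩
  · rintro r _ ⟨l, -, rfl⟩
    exact Subtype.coe_prop _
  · simpa only [← image_inter hf] using (finite_prefixes_inter_prefixes hrs).image f

lemma Set.Finite.of_diff_of_diff_of_inter {α : Type*} {x a b : Set α} (ha : (x \ a).Finite)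
    (hb : (x \ b).Finite) (hab : (a ∩ b).Finite) : x.Finite :=
  ((ha.union hb).union hab).subset fun n hn => by
    by_cases n ∈ a <;> by_cases n ∈ b <;> simp_all

lemma exists_apply_notMem_of_mk_lt {α β : Type u} {g : β → α} (hg : g.Injective) {A : Set α}
    (hA : #A < #β) : ∃ b, g b ∉ A := by
  by_contra! h
  exact (mk_le_of_injective (f := fun b => (⟨g b, h b⟩ : A))
    fun b c hbc => hg (congrArg Subtype.val hbc)).not_gt hA

lemma mk_nat_to_bool : #(ℕ → Bool) = 𝔠 := by
  simp [two_power_aleph0]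

theorem stmt3_general (X : Set (Set ℕ)) (hX : ∀ x ∈ X, x.Infinite)
    (hbase : ∀ u : Set ℕ, u.Infinite → ∃ x ∈ X, (x \ u).Finite)
    (A : Set (Set ℕ)) (hcard : Cardinal.mk A < Cardinal.continuum) :
    ∀ u : Set ℕ, u.Infinite → ∃ x ∈ X \ A, (x \ u).Finite := by
  intro u hu
  obtain ⟨v, hvu, hv, hv_ad⟩ := hu.exists_almostDisjoint_family
  choose g hgX hgv using fun r => hbase (v r) (hv r)
  have hg : g.Injective := fun r s hrs => by
    by_contra hne
    exact hX _ (hgX r) ((hgv r).of_diff_of_diff_of_inter (hrs ▸ hgv s) (hv_ad hne))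
  obtain ⟨r, hr⟩ := exists_apply_notMem_of_mk_lt hg (mk_nat_to_bool ▸ hcard)
  exact ⟨g r, ⟨hgX r, hr⟩, (hgv r).subset (sdiff_subset_sdiff_right (hvu r))⟩

/-- if `X ⊆ [ω]^ω` is a base for the full semifilter `[ω]^ω`
and `|A| < 𝔠`, then `X ∖ A` is still a base for `[ω]^ω`. -/
theorem stmt3 (X : Set (Set ℕ)) (hX : ∀ x ∈ X, x.Infinite)
    (hbase : ∀ u : Set ℕ, u.Infinite → ∃ x ∈ X, (x \ u).Finite)
    (A : Set (Set ℕ)) (hA : A ⊆ X) (hcard : Cardinal.mk A < Cardinal.continuum) :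
    ∀ u : Set ℕ, u.Infinite → ∃ x ∈ X \ A, (x \ u).Finite :=
  stmt3_general X hX hbase A hcard
end

section
/- Let X be a metrizable space and Y ⊆ X a scattered subspace whose Cantor–Bendixson height is countable. Then Y is a G_δ subset of X. In particular, every scattered subspace of a separable metrizable space is G_δ. -/
open Set

variable {X : Type*} [TopologicalSpace X]

/-- The Cantor–Bendixson derivative of a subspace: the set of points of `Y`
which are not isolated in `Y` (with its subspace topology). -/
def cbDeriv (Y : Set X) : Set X :=
  {y ∈ Y | ∀ U : Set X, IsOpen U → y ∈ U → ∃ z ∈ U ∩ Y, z ≠ y}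

/-- Iterated Cantor–Bendixson derivatives: `Y^(0) = Y`, `Y^(α+1) = cbDeriv (Y^(α))`,
intersections at limits. -/
noncomputable def cbIter (Y : Set X) (o : Ordinal) : Set X :=
  Ordinal.limitRecOn o Y (fun _ ih => cbDeriv ih)
    (fun o _ ih => ⋂ (o' : Ordinal) (h : o' < o), ih o' h)

/-!
Give each `y ∈ Y` its Cantor–Bendixson rank `ρ y`, the ordinal with `y ∈ Y^(ρ y) \ Y^(ρ y + 1)`,
and a radius `ε y > 0` such that the ball `B(y, ε y)` meets `Y^(ρ y)` only in `y`; thus `y` is the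
only point of `Y` of rank `≥ ρ y` in that ball. Then
`Y = ⋂ₙ ⋃_{y ∈ Y} B(y, min (ε y / 2) (1 / (n + 1)))`: if `x ∉ Y` lies in the right-hand side,
take `y ∈ Y` of minimal rank with `d(x, y) < ε y / 2`. As `d(x, y) > 0`, a later union supplies
`z ∈ Y` with `d(x, z) < ε z / 2` and `d(x, z) < d(x, y)`; by minimality `ρ y ≤ ρ z`, and
`d(z, y) < ε y`, so `z = y`, which is absurd.
-/

open Metric

universe v

theorem cbIter_zero (Y : Set X) : cbIter Y 0 = Y := Ordinal.limitRecOn_zero ..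

theorem cbIter_succ (Y : Set X) (o : Ordinal) :
    cbIter Y (o + 1) = cbDeriv (cbIter Y o) :=
  Ordinal.limitRecOn_add_one ..

theorem cbIter_limit (Y : Set X) {o : Ordinal} (ho : Order.IsSuccLimit o) :
    cbIter Y o = ⋂ (o' : Ordinal) (_ : o' < o), cbIter Y o' :=
  Ordinal.limitRecOn_limit _ _ _ _ ho

theorem cbDeriv_subset (Y : Set X) : cbDeriv Y ⊆ Y := sep_subset _ _

theorem exists_isOpen_inter_subset_singleton_of_notMem_cbDeriv {S : Set X} {y : X}
    (hy : y ∈ S) (hy' : y ∉ cbDeriv S) : ∃ U, IsOpen U ∧ y ∈ U ∧ U ∩ S ⊆ {y} := by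
  by_contra! h
  exact hy' ⟨hy, fun U hU hyU => by simpa using not_subset.1 (h U hU hyU)⟩

theorem cbIter_antitone (Y : Set X) : Antitone (cbIter Y) := by
  intro α β hαβ
  induction β using WellFoundedLT.induction with
  | ind β IH =>
    rcases hαβ.eq_or_lt with rfl | hlt
    · exact subset_rfl
    rcases Ordinal.zero_or_succ_or_isSuccLimit β with rfl | ⟨γ, rfl⟩ | hβ
    · exact absurd hlt not_lt_zero
    · rw [Order.succ_eq_add_one, cbIter_succ]
      exact (cbDeriv_subset _).trans (IH γ (Order.lt_succ γ) (Order.lt_succ_iff.mp hlt))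
    · rw [cbIter_limit Y hβ]
      exact iInter₂_subset α hlt

theorem mem_cbIter_of_forall_lt {Y : Set X} {y : X} (hy : y ∈ Y) {β : Ordinal}
    (h : ∀ ξ < β, y ∈ cbIter Y (ξ + 1)) : y ∈ cbIter Y β := by
  rcases Ordinal.zero_or_succ_or_isSuccLimit β with rfl | ⟨γ, rfl⟩ | hβ
  · rwa [cbIter_zero]
  · exact h γ (Order.lt_succ γ)
  · rw [cbIter_limit Y hβ]
    exact mem_iInter₂.2 fun ξ hξ => cbIter_antitone Y (Order.le_succ ξ) (h ξ hξ)

/-- Junk value `0` when `y` lies in every derivative of `Y`. -/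
noncomputable def cbRank (Y : Set X) (y : X) : Ordinal.{v} :=
  sInf {β | y ∉ cbIter Y (β + 1)}

theorem mem_cbIter_cbRank {Y : Set X} {y : X} (hy : y ∈ Y) : y ∈ cbIter Y (cbRank Y y) :=
  mem_cbIter_of_forall_lt hy fun _ hξ => not_not.1 (notMem_of_lt_csInf' hξ)

theorem notMem_cbIter_cbRank_succ {Y : Set X} {α : Ordinal.{v}} (hα : cbIter Y α = ∅) (y : X) :
    y ∉ cbIter Y ((cbRank Y y : Ordinal.{v}) + 1) := by
  have hy : y ∉ cbIter Y (α + 1) := fun h => by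
    simpa [hα] using cbIter_antitone Y (Order.le_succ α) h
  exact csInf_mem (s := {β | y ∉ cbIter Y (β + 1)}) ⟨α, hy⟩

theorem isGδ_of_isolating_rank {M ι : Type*} [MetricSpace M] [LinearOrder ι] [WellFoundedLT ι]
    {Y : Set M} (r : M → ι) (ε : M → ℝ) (hε : ∀ y ∈ Y, 0 < ε y)
    (hiso : ∀ y ∈ Y, ∀ z ∈ Y, r y ≤ r z → dist z y < ε y → z = y) : IsGδ Y := by
  have hY : Y = ⋂ n : ℕ, ⋃ y ∈ Y, ball y (min (ε y / 2) (1 / (n + 1))) := by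
    refine (subset_iInter fun n y hy => mem_biUnion hy (mem_ball_self ?_)).antisymm ?_
    · exact lt_min (half_pos (hε y hy)) Nat.one_div_pos_of_nat
    intro x hx
    by_contra hxY
    have hclose : ∀ n : ℕ, ∃ y ∈ Y, dist x y < ε y / 2 ∧ dist x y < 1 / (n + 1) := by
      intro n
      obtain ⟨y, hy, hxy⟩ := mem_iUnion₂.1 (mem_iInter.1 hx n)
      exact ⟨y, hy, lt_min_iff.1 (mem_ball.1 hxy)⟩
    set S := {y ∈ Y | dist x y < ε y / 2}
    have hS : S.Nonempty := let ⟨y, hy, hxy, _⟩ := hclose 0; ⟨y, hy, hxy⟩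
    obtain ⟨hyY, hxy⟩ : Function.argminOn r S hS ∈ S := Function.argminOn_mem r S hS
    set y := Function.argminOn r S hS
    obtain ⟨n, hn⟩ := exists_nat_one_div_lt (dist_pos.2 fun h : x = y => hxY (h ▸ hyY))
    obtain ⟨z, hzY, hxz, hxzn⟩ := hclose n
    have hrank : r y ≤ r z := Function.argminOn_le r S ⟨hzY, hxz⟩
    have hzy : dist z y < ε y := calc
      dist z y ≤ dist x z + dist x y := dist_triangle_left z y x
      _ < ε y := by linarith
    obtain rfl : z = y := hiso y hyY z hzY hrank hzy
    exact (hxzn.trans hn).false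
  rw [hY]
  exact .iInter fun n => (isOpen_biUnion fun y _ => isOpen_ball).isGδ

theorem exists_ball_isolating_cbRank {M : Type*} [MetricSpace M] {Y : Set M} {α : Ordinal.{v}}
    (hα : cbIter Y α = ∅) {y : M} (hy : y ∈ Y) :
    ∃ ε > 0, ∀ z ∈ Y, (cbRank Y y : Ordinal.{v}) ≤ cbRank Y z → dist z y < ε → z = y := by
  have hy' : y ∉ cbDeriv (cbIter Y (cbRank Y y)) :=
    cbIter_succ Y _ ▸ notMem_cbIter_cbRank_succ hα y
  obtain ⟨U, hU, hyU, hiso⟩ :=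
    exists_isOpen_inter_subset_singleton_of_notMem_cbDeriv (mem_cbIter_cbRank hy) hy'
  obtain ⟨ε, hε, hball⟩ := isOpen_iff.1 hU y hyU
  exact ⟨ε, hε, fun z hz hrank hzy =>
    hiso ⟨hball hzy, cbIter_antitone Y hrank (mem_cbIter_cbRank hz)⟩⟩

theorem stmt5_general [TopologicalSpace.MetrizableSpace X] (Y : Set X)
    (hheight : ∃ α : Ordinal, α < (Cardinal.aleph 1).ord ∧ cbIter Y α = ∅) :
    IsGδ Y := by
  let _ : MetricSpace X := TopologicalSpace.metrizableSpaceMetric X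
  obtain ⟨α, -, hα⟩ := hheight
  choose! ε hε hiso using fun y (hy : y ∈ Y) => exists_ball_isolating_cbRank hα hy
  exact isGδ_of_isolating_rank _ ε hε hiso

/-- a scattered subspace of a metrizable space whose
Cantor–Bendixson height is countable is a `G_δ` subset. -/
theorem stmt5 [TopologicalSpace.MetrizableSpace X] (Y : Set X)
    (hscat : ∀ A : Set X, A ⊆ Y → A.Nonempty →
      ∃ a ∈ A, ∃ U : Set X, IsOpen U ∧ U ∩ A = {a})
    (hheight : ∃ α : Ordinal, α < (Cardinal.aleph 1).ord ∧ cbIter Y α = ∅) :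
    IsGδ Y :=
  stmt5_general Y hheight
end

section
/- Let g ∈ ∏_{n∈ω} [ω]^{2^{n+1}} be a product-type sequence such that |g(n) ∖ ⋃_{i<n} g(i)| ≥ 2 for all n ∈ ω. Then there exist disjoint infinite sets a, b ⊆ ω such that a ∩ g(n) ≠ ∅ and b ∩ g(n) ≠ ∅ for every n ∈ ω. -/
open Set Finset

/-- given `g` with `g n` of size `2^(n+1)` and
`|g(n) ∖ ⋃_{i<n} g(i)| ≥ 2` for all `n`, there are disjoint infinite sets
`a, b ⊆ ω` each meeting every `g n`. -/
theorem stmt10 (g : ℕ → Finset ℕ)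
    (hcard : ∀ n, (g n).card = 2 ^ (n + 1))
    (hnew : ∀ n, 2 ≤ (g n \ (Finset.range n).biUnion g).card) :
    ∃ a b : Set ℕ, a.Infinite ∧ b.Infinite ∧ Disjoint a b ∧
      ∀ n, (a ∩ ↑(g n)).Nonempty ∧ (b ∩ ↑(g n)).Nonempty := by
  have h : ∀ n, ∃ p : ℕ × ℕ, p.1 ∈ g n \ (Finset.range n).biUnion g ∧
      p.2 ∈ g n \ (Finset.range n).biUnion g ∧ p.1 ≠ p.2 := by
    intro n
    obtain ⟨x, hx, y, hy, hxy⟩ := Finset.one_lt_card.mp (lt_of_lt_of_le one_lt_two (hnew n))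
    exact ⟨(x, y), hx, hy, hxy⟩
  choose p hp1 hp2 hp3 using h
  set x : ℕ → ℕ := fun n => (p n).1 with hxdef
  set y : ℕ → ℕ := fun n => (p n).2 with hydef
  have hxg : ∀ n, x n ∈ g n := fun n => (Finset.mem_sdiff.mp (hp1 n)).1
  have hyg : ∀ n, y n ∈ g n := fun n => (Finset.mem_sdiff.mp (hp2 n)).1
  have hxnew : ∀ {n m : ℕ}, n < m → x m ∉ g n := by
    intro n m hnm h
    exact (Finset.mem_sdiff.mp (hp1 m)).2
      (Finset.mem_biUnion.mpr ⟨n, Finset.mem_range.mpr hnm, h⟩)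
  have hynew : ∀ {n m : ℕ}, n < m → y m ∉ g n := by
    intro n m hnm h
    exact (Finset.mem_sdiff.mp (hp2 m)).2
      (Finset.mem_biUnion.mpr ⟨n, Finset.mem_range.mpr hnm, h⟩)
  have hxinj : Function.Injective x := by
    intro n m h
    rcases lt_trichotomy n m with hlt | heq | hgt
    · exact absurd (h ▸ hxg n) (hxnew hlt)
    · exact heq
    · exact absurd (hxg m) (fun hm => hxnew hgt (h ▸ hm))
  have hyinj : Function.Injective y := by
    intro n m h
    rcases lt_trichotomy n m with hlt | heq | hgt
    · exact absurd (h ▸ hyg n) (hynew hlt)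
    · exact heq
    · exact absurd (hyg m) (fun hm => hynew hgt (h ▸ hm))
  have hxy : ∀ n m, x n ≠ y m := by
    intro n m h
    rcases lt_trichotomy n m with hlt | heq | hgt
    · exact hynew hlt (h ▸ hxg n)
    · exact hp3 n (heq ▸ h)
    · exact hxnew hgt (h ▸ hyg m)
  refine ⟨Set.range x, Set.range y, Set.infinite_range_of_injective hxinj,
    Set.infinite_range_of_injective hyinj, ?_, ?_⟩
  · rw [Set.disjoint_left]
    rintro a ⟨n, rfl⟩ ⟨m, hm⟩
    exact hxy n m hm.symm
  · intro n
    exact ⟨⟨x n, ⟨n, rfl⟩, hxg n⟩, ⟨y n, ⟨n, rfl⟩, hyg n⟩⟩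
end

section
/- Let K ⊆ P(ω) be a countable compact set and for every x ∈ K let A_x ⊆ P(ω) be a sequence converging to x. Then for every x ∈ K there exists a finite set L_x ⊆ A_x such that K ∪ ⋃_{x∈K} (A_x ∖ L_x) is compact. -/
open Set Filter Metric

/-- if `K ⊆ P(ω)` is a countable compact set and for each `x ∈ K`,
`A_x` is (the range of) a sequence converging to `x`, then one can remove a finite
set `L_x` from each `A_x` so that `K ∪ ⋃_{x ∈ K} (A_x ∖ L_x)` is compact. -/
theorem stmt12 (K : Set (ℕ → Bool)) (hKc : K.Countable) (hK : IsCompact K)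
    (f : ↥K → ℕ → (ℕ → Bool))
    (hf : ∀ x : ↥K, Filter.Tendsto (f x) Filter.atTop (nhds (x : ℕ → Bool))) :
    ∃ L : ↥K → Set (ℕ → Bool),
      (∀ x : ↥K, (L x).Finite ∧ L x ⊆ Set.range (f x)) ∧
      IsCompact (K ∪ ⋃ x : ↥K, (Set.range (f x) \ L x)) := by
  letI : MetricSpace (ℕ → Bool) := TopologicalSpace.metrizableSpaceMetric (ℕ → Bool)
  rcases K.eq_empty_or_nonempty with hKe | hKne
  · subst hKe
    refine ⟨fun _ => ∅, fun x => ⟨finite_empty, empty_subset _⟩, ?_⟩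
    have : IsEmpty (↥(∅ : Set (ℕ → Bool))) := by simp
    simp
  · obtain ⟨e, he⟩ := Set.countable_iff_exists_injective.mp hKc
    set r : ↥K → ℝ := fun x => (1/2 : ℝ) ^ (e x) with hr
    have hrpos : ∀ x, 0 < r x := fun x => by positivity
    set L : ↥K → Set (ℕ → Bool) :=
      fun x => Set.range (f x) \ Metric.ball (x : ℕ → Bool) (r x) with hL
    have hLfin : ∀ x, (L x).Finite := by
      intro x
      obtain ⟨N, hN⟩ := (Metric.tendsto_atTop.mp (hf x)) (r x) (hrpos x)
      refine Set.Finite.subset ((Set.finite_Iio N).image (f x)) ?_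
      rintro p ⟨⟨n, rfl⟩, hp⟩
      refine ⟨n, ?_, rfl⟩
      by_contra hn
      exact hp (Metric.mem_ball.mpr (hN n (le_of_not_gt hn)))
    refine ⟨L, fun x => ⟨hLfin x, diff_subset⟩, ?_⟩
    set S := K ∪ ⋃ x : ↥K, (Set.range (f x) \ L x) with hS
    have hSsub : ∀ x : ↥K, Set.range (f x) \ L x ⊆ Metric.ball (x : ℕ → Bool) (r x) := by
      intro x p hp
      by_contra h
      exact hp.2 ⟨hp.1, h⟩
    have hclosed : IsClosed S := by
      rw [← isOpen_compl_iff, Metric.isOpen_iff]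
      intro y hy
      have hyS : y ∉ S := hy
      have hyK : y ∉ K := fun h => hyS (Or.inl h)
      have hδ : 0 < infDist y K := by
        rw [← hK.isClosed.notMem_iff_infDist_pos hKne]
        exact hyK
      set δ := infDist y K with hδdef
      have hdist : ∀ x : ↥K, δ ≤ dist y (x : ℕ → Bool) := fun x =>
        Metric.infDist_le_dist_of_mem x.2
      -- choose n₀ with (1/2)^n < δ/2 for n ≥ n₀
      obtain ⟨n₀, hn₀⟩ := exists_pow_lt_of_lt_one (by linarith : (0:ℝ) < δ/2)
        (by norm_num : (1/2 : ℝ) < 1)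
      have hsmall : ∀ n, n₀ ≤ n → (1/2 : ℝ) ^ n < δ/2 := by
        intro n hn
        calc (1/2 : ℝ) ^ n ≤ (1/2 : ℝ) ^ n₀ :=
              pow_le_pow_of_le_one (by norm_num) (by norm_num) hn
          _ < δ/2 := hn₀
      set T := S ∩ Metric.ball y (δ/2) with hT
      have hTfin : T.Finite := by
        have hidx : {x : ↥K | e x < n₀}.Finite :=
          Set.Finite.preimage he.injOn (Set.finite_Iio n₀)
        have hx : ∀ x : ↥K, (Set.range (f x) ∩ Metric.ball y (δ/2)).Finite := by
          intro x
          obtain ⟨M, hM⟩ := (Metric.tendsto_atTop.mp (hf x)) (δ/2) (by linarith)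
          refine Set.Finite.subset ((Set.finite_Iio M).image (f x)) ?_
          rintro p ⟨⟨n, rfl⟩, hp⟩
          refine ⟨n, ?_, rfl⟩
          by_contra hn
          have h1 : dist (f x n) (x : ℕ → Bool) < δ/2 := hM n (le_of_not_gt hn)
          have h2 : dist (f x n) y < δ/2 := by
            rw [dist_comm]; exact Metric.mem_ball'.mp hp
          have h3 : δ ≤ dist y (x : ℕ → Bool) := hdist x
          have := dist_triangle y (f x n) (x : ℕ → Bool)
          rw [dist_comm y (f x n)] at this
          linarith
        refine Set.Finite.subset (Set.Finite.biUnion hidx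
          (fun x _ => hx x)) ?_
        rintro p ⟨hpS, hpB⟩
        rcases hpS with hpK | hpU
        · exfalso
          have : δ ≤ dist y p := Metric.infDist_le_dist_of_mem hpK
          have : dist p y < δ/2 := Metric.mem_ball.mp hpB
          rw [dist_comm] at this
          linarith
        · obtain ⟨_, ⟨x, rfl⟩, hpx⟩ := hpU
          have hpball := hSsub x hpx
          have hd1 : dist p (x : ℕ → Bool) < r x := Metric.mem_ball.mp hpball
          have hd2 : dist p y < δ/2 := Metric.mem_ball.mp hpB
          have hd3 : δ ≤ dist y (x : ℕ → Bool) := hdist x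
          have hex : e x < n₀ := by
            by_contra hcon
            have : r x < δ/2 := hsmall (e x) (le_of_not_gt hcon)
            have htri := dist_triangle y p (x : ℕ → Bool)
            rw [dist_comm y p] at htri
            linarith
          exact Set.mem_biUnion (show x ∈ {x : ↥K | e x < n₀} from hex)
            ⟨hpx.1, hpB⟩
      have hyT : y ∉ T := fun h => hyS h.1
      obtain ⟨ε, hεpos, hε⟩ := Metric.isOpen_iff.mp hTfin.isClosed.isOpen_compl y hyT
      refine ⟨min ε (δ/2), lt_min hεpos (by linarith), ?_⟩
      intro z hz
      intro hzS
      have hz1 : z ∈ Metric.ball y ε := Metric.mem_ball.mpr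
        (lt_of_lt_of_le (Metric.mem_ball.mp hz) (min_le_left _ _))
      have hz2 : z ∈ Metric.ball y (δ/2) := Metric.mem_ball.mpr
        (lt_of_lt_of_le (Metric.mem_ball.mp hz) (min_le_right _ _))
      exact hε hz1 ⟨hzS, hz2⟩
    exact hclosed.isCompact
end

section
/- If X is a Hurewicz space, Y a topological space, and ψ : X ⇒ Y a compact-valued upper semicontinuous (cusco) multifunction, then ψ[X] := ⋃_{x∈X} ψ(x) is Hurewicz. -/
open Set Filter

/-- The Hurewicz covering property for a subset `S` of a topological space:
for every sequence of open covers of `S` there are finite subfamilies whose unions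
eventually cover each point of `S`. -/
def HurewiczSet {Z : Type*} [TopologicalSpace Z] (S : Set Z) : Prop :=
  ∀ 𝒰 : ℕ → Set (Set Z), (∀ n, (∀ V ∈ 𝒰 n, IsOpen V) ∧ S ⊆ ⋃₀ 𝒰 n) →
    ∃ ℱ : ℕ → Set (Set Z), (∀ n, (ℱ n).Finite ∧ ℱ n ⊆ 𝒰 n) ∧
      ∀ x ∈ S, ∀ᶠ n in Filter.atTop, x ∈ ⋃₀ ℱ n

/-- a compact-valued upper semicontinuous (cusco) image of a
Hurewicz space is Hurewicz. -/
theorem stmt13 {X Y : Type*} [TopologicalSpace X] [TopologicalSpace Y]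
    (hX : HurewiczSet (Set.univ : Set X))
    (ψ : X → Set Y)
    (hcpt : ∀ x, (ψ x).Nonempty ∧ IsCompact (ψ x))
    (husc : ∀ x, ∀ V : Set Y, IsOpen V → ψ x ⊆ V →
      ∃ U : Set X, IsOpen U ∧ x ∈ U ∧ ∀ x' ∈ U, ψ x' ⊆ V) :
    HurewiczSet (⋃ x, ψ x) := by
  classical
  intro 𝒰 h𝒰
  have key : ∀ n x, ∃ (F : Set (Set Y)) (U : Set X), F.Finite ∧ F ⊆ 𝒰 n ∧
      IsOpen U ∧ x ∈ U ∧ ∀ x' ∈ U, ψ x' ⊆ ⋃₀ F := by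
    intro n x
    obtain ⟨hopen, hcov⟩ := h𝒰 n
    have hsub : ψ x ⊆ ⋃ i : 𝒰 n, (i : Set Y) := by
      intro y hy
      obtain ⟨V, hV, hyV⟩ := hcov (mem_iUnion.2 ⟨x, hy⟩)
      exact mem_iUnion.2 ⟨⟨V, hV⟩, hyV⟩
    obtain ⟨t, ht⟩ := (hcpt x).2.elim_finite_subcover (fun i : 𝒰 n => (i : Set Y))
      (fun i => hopen i i.2) hsub
    refine ?_
    set F : Set (Set Y) := (fun i : 𝒰 n => (i : Set Y)) '' ↑t with hF
    have hFsub : F ⊆ 𝒰 n := by rintro V ⟨i, _, rfl⟩; exact i.2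
    have hFopen : IsOpen (⋃₀ F) := isOpen_sUnion fun V hV => hopen V (hFsub hV)
    have hψF : ψ x ⊆ ⋃₀ F := by
      intro y hy
      obtain ⟨i, hi, hyi⟩ := mem_iUnion₂.1 (ht hy)
      exact ⟨i, ⟨i, hi, rfl⟩, hyi⟩
    obtain ⟨U, hUopen, hxU, hU⟩ := husc x (⋃₀ F) hFopen hψF
    exact ⟨F, U, t.finite_toSet.image _, hFsub, hUopen, hxU, hU⟩
  choose F U hFfin hFsub hUopen hxU hU using key
  obtain ⟨𝒢, h𝒢, h𝒢cov⟩ := hX (fun n => Set.range (U n)) (by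
    intro n
    constructor
    · rintro V ⟨x, rfl⟩; exact hUopen n x
    · intro x _; exact ⟨U n x, ⟨x, rfl⟩, hxU n x⟩)
  have pick : ∀ n (V : {V // V ∈ 𝒢 n}), ∃ x, U n x = (V : Set X) :=
    fun n V => (h𝒢 n).2 V.2
  choose g hg using pick
  refine ⟨fun n => ⋃ V : {V // V ∈ 𝒢 n}, F n (g n V), ?_, ?_⟩
  · intro n
    have : Finite {V // V ∈ 𝒢 n} := (h𝒢 n).1.to_subtype
    refine ⟨Set.finite_iUnion fun V => hFfin n _, ?_⟩
    intro W hW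
    obtain ⟨V, hV⟩ := mem_iUnion.1 hW
    exact hFsub n _ hV
  · intro y hy
    obtain ⟨x₀, hx₀⟩ := mem_iUnion.1 hy
    filter_upwards [h𝒢cov x₀ (mem_univ _)] with n hn
    obtain ⟨V, hVmem, hx₀V⟩ := hn
    have hx₀U : x₀ ∈ U n (g n ⟨V, hVmem⟩) := by rw [hg n ⟨V, hVmem⟩]; exact hx₀V
    obtain ⟨W, hW, hyW⟩ := hU n (g n ⟨V, hVmem⟩) x₀ hx₀U hx₀
    exact ⟨W, mem_iUnion.2 ⟨⟨V, hVmem⟩, hW⟩, hyW⟩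
end

section
/- A subset X of P(ω) is Hurewicz if and only if for every G_δ set G ⊆ P(ω) with X ⊆ G there exists a σ-compact set F ⊆ P(ω) with X ⊆ F ⊆ G. -/
open Set Filter

/-- Just–Miller–Scheepers–Szeptycki: `X ⊆ P(ω)` is Hurewicz iff
every `G_δ` set containing `X` contains a σ-compact set containing `X`. -/
theorem stmt14 (X : Set (ℕ → Bool)) :
    HurewiczSet X ↔
      ∀ G : Set (ℕ → Bool), IsGδ G → X ⊆ G →
        ∃ F : Set (ℕ → Bool),
          (∃ C : ℕ → Set (ℕ → Bool), (∀ n, IsCompact (C n)) ∧ F = ⋃ n, C n) ∧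
          X ⊆ F ∧ F ⊆ G := by
  constructor
  · -- Hurewicz → σ-compact interpolation
    intro hH G hG hXG
    obtain ⟨U, hUopen, rfl⟩ := hG.eq_iInter_nat
    -- cover by clopen sets contained in finite intersections of the U's
    set 𝒰 : ℕ → Set (Set (ℕ → Bool)) :=
      fun n => {C | IsClopen C ∧ C ⊆ ⋂ j ≤ n, U j} with h𝒰
    have hcovhyp : ∀ n, (∀ V ∈ 𝒰 n, IsOpen V) ∧ X ⊆ ⋃₀ 𝒰 n := by
      intro n
      constructor
      · exact fun V hV => hV.1.isOpen
      · intro x hx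
        have hxU : x ∈ ⋂ j ≤ n, U j := by
          refine mem_iInter₂.2 fun j _ => mem_iInter.1 (hXG hx) j
        have hopen : IsOpen (⋂ j ≤ n, U j) := by
          have : (⋂ j ≤ n, U j) = ⋂ j ∈ Set.Iic n, U j := by simp [Set.Iic]
          rw [this]
          exact (Set.finite_Iic n).isOpen_biInter fun j _ => hUopen j
        obtain ⟨V, hV, hxV, hVsub⟩ := compact_exists_isClopen_in_isOpen hopen hxU
        exact ⟨V, ⟨hV, hVsub⟩, hxV⟩
    obtain ⟨ℱ, hℱ, hev⟩ := hH 𝒰 hcovhyp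
    · -- define compact pieces
      set K : ℕ → Set (ℕ → Bool) := fun n => ⋂ m ∈ {m | n ≤ m}, ⋃₀ ℱ m with hK
      have hKclosed : ∀ n, IsClosed (K n) := by
        intro n
        refine isClosed_biInter fun m _ => ?_
        rw [sUnion_eq_biUnion]
        exact (hℱ m).1.isClosed_biUnion fun C hC => (((hℱ m).2 hC).1).isClosed
      refine ⟨⋃ n, K n, ⟨K, fun n => (hKclosed n).isCompact, rfl⟩, ?_, ?_⟩
      · intro x hx
        obtain ⟨n, hn⟩ := (hev x hx).exists_forall_of_atTop
        exact mem_iUnion.2 ⟨n, mem_iInter₂.2 fun m hm => hn m hm⟩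
      · rintro x hx
        obtain ⟨n, hn⟩ := mem_iUnion.1 hx
        rw [hK] at hn
        refine mem_iInter.2 fun j => ?_
        have hmem : x ∈ ⋃₀ ℱ (max n j) := mem_iInter₂.1 hn _ (le_max_left n j)
        obtain ⟨C, hC, hxC⟩ := hmem
        have := ((hℱ (max n j)).2 hC).2 hxC
        exact mem_iInter₂.1 this j (le_max_right n j)
  · -- σ-compact interpolation → Hurewicz
    intro h 𝒰 h𝒰
    have hGδ : IsGδ (⋂ n, ⋃₀ 𝒰 n) :=
      .iInter_of_isOpen fun n => isOpen_sUnion (h𝒰 n).1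
    have hXG : X ⊆ ⋂ n, ⋃₀ 𝒰 n := fun x hx => mem_iInter.2 fun n => (h𝒰 n).2 hx
    obtain ⟨F, ⟨C, hC, rfl⟩, hXF, hFG⟩ := h _ hGδ hXG
    -- for each n, choose a finite subcover of C 0 ∪ ... ∪ C n from 𝒰 n
    have key : ∀ n, ∃ ℱ : Set (Set (ℕ → Bool)), ℱ.Finite ∧ ℱ ⊆ 𝒰 n ∧
        (⋃ m ∈ Finset.range (n+1), C m) ⊆ ⋃₀ ℱ := by
      intro n
      have hcomp : IsCompact (⋃ m ∈ Finset.range (n+1), C m) :=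
        (Finset.range (n+1)).isCompact_biUnion fun m _ => hC m
      have hcover : (⋃ m ∈ Finset.range (n+1), C m) ⊆ ⋃₀ 𝒰 n := by
        intro x hx
        obtain ⟨m, _, hm⟩ := mem_iUnion₂.1 hx
        have : x ∈ ⋂ k, ⋃₀ 𝒰 k := hFG (mem_iUnion.2 ⟨m, hm⟩)
        exact mem_iInter.1 this n
      obtain ⟨ℱ, hℱsub, hℱfin, hℱcov⟩ :=
        hcomp.elim_finite_subcover_image (fun V hV => (h𝒰 n).1 V hV) (by
          simpa [sUnion_eq_biUnion] using hcover)
      exact ⟨ℱ, hℱfin, hℱsub, by simpa [sUnion_eq_biUnion] using hℱcov⟩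
    choose ℱ hfin hsub hcov using key
    refine ⟨ℱ, fun n => ⟨hfin n, hsub n⟩, ?_⟩
    intro x hx
    obtain ⟨m, hm⟩ := mem_iUnion.1 (hXF hx)
    filter_upwards [eventually_ge_atTop m] with n hn
    exact hcov n (mem_iUnion₂.2 ⟨m, Finset.mem_range.2 (Nat.lt_succ_of_le hn), hm⟩)
end

section
/- A set X ⊆ P(ω) (equivalently, of reals) is Hurewicz if and only if every continuous image of X in the Baire space ω^ω is bounded with respect to eventual domination ≤*. -/
open Set Filter

/-- Recław: `X ⊆ P(ω)` is Hurewicz iff every continuous image of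
`X` in the Baire space `ω^ω` is bounded with respect to eventual domination. -/
theorem stmt15 (X : Set (ℕ → Bool)) :
    HurewiczSet X ↔
      ∀ φ : (ℕ → Bool) → (ℕ → ℕ), ContinuousOn φ X →
        ∃ b : ℕ → ℕ, ∀ x ∈ X, ∀ᶠ n in Filter.atTop, φ x n ≤ b n := by
  constructor
  · -- Hurewicz → every continuous image is bounded
    intro hX φ hφ
    classical
    -- cover by open sets on which φ · n is bounded (relative to X)
    set 𝒰 : ℕ → Set (Set (ℕ → Bool)) :=
      fun n => {u | IsOpen u ∧ ∃ k, ∀ y ∈ u ∩ X, φ y n ≤ k} with h𝒰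
    have hcov : ∀ n, (∀ V ∈ 𝒰 n, IsOpen V) ∧ X ⊆ ⋃₀ 𝒰 n := by
      intro n
      refine ⟨fun V hV => hV.1, fun x hx => ?_⟩
      have hcwa : ContinuousWithinAt φ X x := hφ x hx
      have hTn : (fun g : ℕ → ℕ => g n) ⁻¹' Set.Iic (φ x n) ∈ nhds (φ x) := by
        have : IsOpen ((fun g : ℕ → ℕ => g n) ⁻¹' Set.Iic (φ x n)) :=
          (continuous_apply n).isOpen_preimage _ (isOpen_discrete _)
        exact this.mem_nhds (by simp)
      have hmem : φ ⁻¹' ((fun g : ℕ → ℕ => g n) ⁻¹' Set.Iic (φ x n)) ∈ nhdsWithin x X :=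
        hcwa hTn
      rcases mem_nhdsWithin.1 hmem with ⟨u, hu_open, hxu, hu⟩
      exact ⟨u, ⟨hu_open, φ x n, fun y hy => hu ⟨hy.1, hy.2⟩⟩, hxu⟩
    obtain ⟨ℱ, hℱ, hℱcov⟩ := hX 𝒰 hcov
    -- a bound for each element of the finite family
    have hk : ∀ n, ∀ V ∈ ℱ n, ∃ k, ∀ y ∈ V ∩ X, φ y n ≤ k := by
      intro n V hV
      exact ((hℱ n).2 hV).2
    choose! k hk' using hk
    refine ⟨fun n => ((hℱ n).1.image (k n)).toFinset.sup id, fun x hx => ?_⟩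
    filter_upwards [hℱcov x hx] with n hn
    rcases hn with ⟨V, hV, hxV⟩
    have h1 : φ x n ≤ k n V := hk' n V hV x ⟨hxV, hx⟩
    have h2 : k n V ∈ ((hℱ n).1.image (k n)).toFinset :=
      (Set.Finite.mem_toFinset _).2 ⟨V, hV, rfl⟩
    exact le_trans h1 (Finset.le_sup (f := id) h2)
  · -- every continuous image bounded → Hurewicz
    intro h 𝒰 h𝒰
    classical
    rcases eq_empty_or_nonempty X with hXe | ⟨x0, hx0⟩
    · exact ⟨fun _ => ∅, fun n => ⟨finite_empty, empty_subset _⟩,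
        fun x hx => absurd hx (by simp [hXe])⟩
    -- each cover is nonempty
    have hUne : ∀ n, ∃ U, U ∈ 𝒰 n := by
      intro n
      rcases (h𝒰 n).2 hx0 with ⟨U, hU, _⟩
      exact ⟨U, hU⟩
    -- refine each cover by a countable family of clopen sets
    have key : ∀ n, ∃ D : ℕ → Set (ℕ → Bool),
        (∀ j, IsClopen (D j) ∧ ∃ U ∈ 𝒰 n, D j ⊆ U) ∧ ∀ x ∈ X, ∃ j, x ∈ D j := by
      intro n
      set S : Set (Set (ℕ → Bool)) := {D | IsClopen D ∧ ∃ U ∈ 𝒰 n, D ⊆ U} with hS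
      obtain ⟨T, hTc, hTS, hTU⟩ :=
        TopologicalSpace.isOpen_sUnion_countable S (fun s hs => hs.1.2)
      have hXT : X ⊆ ⋃₀ T := by
        rw [hTU]
        intro x hx
        rcases (h𝒰 n).2 hx with ⟨U, hU, hxU⟩
        obtain ⟨V, hVclopen, hxV, hVU⟩ :=
          compact_exists_isClopen_in_isOpen ((h𝒰 n).1 U hU) hxU
        exact ⟨V, ⟨hVclopen, U, hU, hVU⟩, hxV⟩
      rcases hUne n with ⟨U0, hU0⟩
      have hT'c : (insert (∅ : Set (ℕ → Bool)) T).Countable := hTc.insert _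
      obtain ⟨D, hD⟩ := hT'c.exists_eq_range ⟨∅, mem_insert _ _⟩
      refine ⟨D, fun j => ?_, fun x hx => ?_⟩
      · have : D j ∈ insert (∅ : Set (ℕ → Bool)) T := hD ▸ mem_range_self j
        rcases this with h0 | hT
        · exact h0 ▸ ⟨isClopen_empty, U0, hU0, empty_subset _⟩
        · exact ⟨(hTS hT).1, (hTS hT).2⟩
      · rcases hXT hx with ⟨V, hVT, hxV⟩
        have : V ∈ insert (∅ : Set (ℕ → Bool)) T := mem_insert_of_mem _ hVT
        rw [hD] at this
        rcases this with ⟨j, rfl⟩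
        exact ⟨j, hxV⟩
    choose D hD1 hD2 using key
    choose g hg1 hg2 using fun n j => (hD1 n j).2
    -- increasing clopen unions
    set C : ℕ → ℕ → Set (ℕ → Bool) :=
      fun n k => ⋃ j ∈ Finset.range (k + 1), D n j with hC
    have hCclopen : ∀ n k, IsClopen (C n k) := fun n k =>
      isClopen_biUnion_finset (fun j _ => (hD1 n j).1)
    have hCmono : ∀ n, ∀ {k l}, k ≤ l → C n k ⊆ C n l := by
      intro n k l hkl
      refine Set.iUnion₂_subset fun j hj => Set.subset_biUnion_of_mem ?_
      simp only [Finset.mem_range] at hj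
      exact Finset.mem_range.2 (by omega)
    have hCX : ∀ x ∈ X, ∀ n, ∃ k, x ∈ C n k := by
      intro x hx n
      rcases hD2 n x hx with ⟨j, hj⟩
      exact ⟨j, Set.mem_biUnion (Finset.self_mem_range_succ j) hj⟩
    -- the continuous function
    set φ : (ℕ → Bool) → (ℕ → ℕ) := fun x n => sInf {k | x ∈ C n k} with hφdef
    have hφmem : ∀ x ∈ X, ∀ n, x ∈ C n (φ x n) := by
      intro x hx n
      exact Nat.sInf_mem (hCX x hx n)
    have hφcont : ContinuousOn φ X := by
      rw [continuousOn_pi]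
      intro n x hx
      apply ContinuousAt.continuousWithinAt
      set k := φ x n with hk
      -- an open neighborhood on which φ · n is constantly k
      set W : Set (ℕ → Bool) := C n k \ ⋃ j ∈ Finset.range k, D n j with hW
      have hWopen : IsOpen W :=
        (hCclopen n k).2.sdiff (isClopen_biUnion_finset fun j _ => (hD1 n j).1).1
      have hxW : x ∈ W := by
        refine ⟨hφmem x hx n, ?_⟩
        intro hmem
        rcases Set.mem_iUnion₂.1 hmem with ⟨j, hj, hxj⟩
        simp only [Finset.mem_range] at hj
        have hjk : x ∈ C n j := Set.mem_biUnion (Finset.self_mem_range_succ j) hxj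
        have : φ x n ≤ j := Nat.sInf_le hjk
        omega
      have hconst : ∀ y ∈ W, φ y n = k := by
        intro y hy
        have h1 : φ y n ≤ k := Nat.sInf_le hy.1
        rcases lt_or_eq_of_le h1 with hlt | heq
        · exfalso
          have hyC : y ∈ C n (φ y n) :=
            Nat.sInf_mem (⟨k, hy.1⟩ : {k' | y ∈ C n k'}.Nonempty)
          have : C n (φ y n) ⊆ ⋃ j ∈ Finset.range k, D n j := by
            refine Set.iUnion₂_subset fun j hj => Set.subset_biUnion_of_mem ?_
            simp only [Finset.mem_range] at hj
            exact Finset.mem_range.2 (by omega)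
          exact hy.2 (this hyC)
        · exact heq
      have : ∀ᶠ y in nhds x, φ y n = φ x n :=
        Filter.eventually_of_mem (hWopen.mem_nhds hxW) hconst
      exact Filter.Tendsto.congr' (this.mono fun y hy => hy.symm) tendsto_const_nhds
    obtain ⟨b, hb⟩ := h φ hφcont
    refine ⟨fun n => (fun j => g n j) '' Set.Iic (b n), fun n =>
      ⟨(Set.finite_Iic _).image _, ?_⟩, fun x hx => ?_⟩
    · rintro _ ⟨j, _, rfl⟩
      exact hg1 n j
    · filter_upwards [hb x hx] with n hn
      have hxC : x ∈ C n (φ x n) := hφmem x hx n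
      rcases Set.mem_iUnion₂.1 hxC with ⟨j, hj, hxj⟩
      simp only [Finset.mem_range] at hj
      refine ⟨g n j, ⟨j, ?_, rfl⟩, hg2 n j hxj⟩
      simp only [mem_Iic]
      omega
end

section
/- If X ⊆ [ω]^ω is meager-unbounded, then for every G_δ set G ⊆ P(ω) containing Fin there is a σ-compact set F ⊆ P(ω) with F ⊆ G and |X ∖ F| < 𝔟. -/
open Set Filter Cardinal Classical

/-- The increasing enumeration of an infinite subset of ω coded in Cantor space. -/
noncomputable def nthE (x : ℕ → Bool) (n : ℕ) : ℕ := Nat.nth (fun k => x k = true) n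

/-- The characteristic function of a set of naturals. -/
noncomputable def chi (s : Set ℕ) : ℕ → Bool := fun n => decide (n ∈ s)

/-- A semifilter (coded in Cantor space): a nonempty family of infinite sets closed
upward under almost-containment. -/
def IsSemifilterB (S : Set (ℕ → Bool)) : Prop :=
  S.Nonempty ∧ (∀ s ∈ S, {n | s n = true}.Infinite) ∧
    ∀ a ∈ S, ∀ b : ℕ → Bool, {n | b n = true}.Infinite →
      ({n | a n = true} \ {n | b n = true}).Finite → b ∈ S

/-- The bounding number 𝔟: the least size of a `≤*`-unbounded family in `ω^ω`. -/
noncomputable def bNumber : Cardinal :=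
  sInf {c | ∃ F : Set (ℕ → ℕ), c = Cardinal.mk F ∧
    ∀ g : ℕ → ℕ, ∃ f ∈ F, ¬ ∀ᶠ n in Filter.atTop, f n ≤ g n}

/-- `X ⊆ [ω]^ω` is meager-unbounded: `|X| ≥ 𝔟` and for every `b ∈ [ω]^ω` there are a
meager semifilter `S(b)` and `A ⊆ X` with `|A| < 𝔟` such that `b ≤_{S(b)} x` for all
`x ∈ X ∖ A`. -/
def MeagerUnbounded (X : Set (ℕ → Bool)) : Prop :=
  bNumber ≤ Cardinal.mk X ∧
  ∀ b : ℕ → Bool, {n | b n = true}.Infinite →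
    ∃ S : Set (ℕ → Bool), IsSemifilterB S ∧ IsMeagre S ∧
      ∃ A ⊆ X, Cardinal.mk A < bNumber ∧
        ∀ x ∈ X \ A, chi {n | nthE b n ≤ nthE x n} ∈ S


lemma cyl_mem {U : Set (ℕ → Bool)} (hU : IsOpen U) {y : ℕ → Bool} (hy : y ∈ U) :
    ∃ N, ∀ z : ℕ → Bool, (∀ i < N, z i = y i) → z ∈ U := by
  obtain ⟨I, u, hu, hsub⟩ := isOpen_pi_iff.1 hU y hy
  refine ⟨(I.sup id) + 1, fun z hz => hsub ?_⟩
  intro i hi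
  rw [hz i (Nat.lt_succ_of_le (Finset.le_sup (f := id) hi))]
  exact (hu i hi).2

lemma cyl_isOpen (σ : ℕ → Bool) (m : ℕ) : IsOpen {z : ℕ → Bool | ∀ i < m, z i = σ i} := by
  have : {z : ℕ → Bool | ∀ i < m, z i = σ i}
      = ⋂ i ∈ Finset.range m, (fun z : ℕ → Bool => z i) ⁻¹' {σ i} := by
    ext z; simp [Finset.mem_range]
  rw [this]
  exact isOpen_biInter_finset fun i _ => (continuous_apply i).isOpen_preimage _ (isOpen_discrete _)

lemma dense_ext {U : Set (ℕ → Bool)} (hU : IsOpen U) (hD : Dense U) (m : ℕ) (σ : ℕ → Bool) :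
    ∃ N, m ≤ N ∧ ∃ τ : ℕ → Bool, (∀ i < m, τ i = σ i) ∧
      ∀ z : ℕ → Bool, (∀ i < N, z i = τ i) → z ∈ U := by
  obtain ⟨y, hyU, hyC⟩ := hD.exists_mem_open (cyl_isOpen σ m) ⟨σ, fun i _ => rfl⟩
  obtain ⟨N₀, hN₀⟩ := cyl_mem hU hyU
  exact ⟨max m N₀, le_max_left _ _, y, hyC,
    fun z hz => hN₀ z fun i hi => hz i (lt_of_lt_of_le hi (le_max_right _ _))⟩

lemma dense_ext_list {U : Set (ℕ → Bool)} (hU : IsOpen U) (hD : Dense U) (m : ℕ)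
    (l : List (ℕ → Bool)) : ∃ N, m ≤ N ∧ ∃ ρ : ℕ → Bool,
      ∀ σ ∈ l, ∀ x : ℕ → Bool, (∀ i < m, x i = σ i) →
        (∀ i, m ≤ i → i < N → x i = ρ i) → x ∈ U := by
  induction l with
  | nil => exact ⟨m, le_rfl, fun _ => false, by simp⟩
  | cons σ l ih =>
    obtain ⟨N₁, hmN₁, ρ₁, hρ₁⟩ := ih
    obtain ⟨N₂, hN₁N₂, τ, hτ, hcyl⟩ := dense_ext hU hD N₁ (fun i => if i < m then σ i else ρ₁ i)
    refine ⟨N₂, le_trans hmN₁ hN₁N₂, (fun i => if i < N₁ then ρ₁ i else τ i), ?_⟩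
    intro σ' hσ' x hx hxρ
    rcases List.mem_cons.1 hσ' with h | h
    · subst h
      apply hcyl
      intro i hi
      by_cases him : i < m
      · rw [hx i him, hτ i (lt_of_lt_of_le him hmN₁)]
        simp [him]
      · by_cases hiN₁ : i < N₁
        · rw [hxρ i (le_of_not_gt him) (lt_of_lt_of_le hiN₁ hN₁N₂)]
          simp only [if_pos hiN₁]
          rw [hτ i hiN₁, if_neg him]
        · rw [hxρ i (le_of_not_gt him) hi]
          simp only [if_neg hiN₁]
    · refine hρ₁ σ' h x hx ?_
      intro i h1 h2
      rw [hxρ i h1 (lt_of_lt_of_le h2 hN₁N₂)]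
      simp only [if_pos h2]

lemma dense_step {U : Set (ℕ → Bool)} (hU : IsOpen U) (hD : Dense U) (m : ℕ) :
    ∃ N, m < N ∧ ∃ ρ : ℕ → Bool,
      ∀ x : ℕ → Bool, (∀ i, m ≤ i → i < N → x i = ρ i) → x ∈ U := by
  classical
  let l : List (ℕ → Bool) := (Finset.univ : Finset (Fin m → Bool)).toList.map
    (fun f i => if h : i < m then f ⟨i, h⟩ else false)
  obtain ⟨N, hmN, ρ, hρ⟩ := dense_ext_list hU hD m l
  refine ⟨N + 1, Nat.lt_succ_of_le hmN, ρ, fun x hx => ?_⟩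
  have hσ : (fun i => if h : i < m then x i else false) ∈ l := by
    simp only [l, List.mem_map]
    exact ⟨fun j => x j, Finset.mem_toList.2 (Finset.mem_univ _), rfl⟩
  exact hρ _ hσ x (fun i hi => by simp [hi])
    (fun i h1 h2 => hx i h1 (lt_of_lt_of_le h2 (Nat.le_succ N)))

lemma meagre_seq {S : Set (ℕ → Bool)} (hS : IsMeagre S) :
    ∃ W : ℕ → Set (ℕ → Bool), (∀ k, IsOpen (W k)) ∧ (∀ k, Dense (W k)) ∧
      (∀ j k, j ≤ k → W k ⊆ W j) ∧ ∀ x : ℕ → Bool, (∀ k, x ∈ W k) → x ∉ S := by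
  obtain ⟨T, hTnwd, hTc, hTS⟩ := isMeagre_iff_countable_union_isNowhereDense.1 hS
  obtain ⟨f, hf⟩ := (hTc.insert ∅).exists_eq_range (insert_nonempty _ _)
  have hfnwd : ∀ n, IsNowhereDense (f n) := by
    intro n
    have : f n ∈ insert (∅ : Set (ℕ → Bool)) T := hf ▸ mem_range_self n
    rcases this with h | h
    · rw [h]; exact isNowhereDense_empty
    · exact hTnwd _ h
  set V : ℕ → Set (ℕ → Bool) := fun n => (closure (f n))ᶜ with hV
  have hVo : ∀ n, IsOpen (V n) := fun n => isClosed_closure.isOpen_compl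
  have hVd : ∀ n, Dense (V n) := by
    intro n
    apply interior_eq_empty_iff_dense_compl.1
    have := (hfnwd n).closure
    rwa [IsNowhereDense, closure_closure] at this
  set W : ℕ → Set (ℕ → Bool) := fun n => ⋂ j ∈ Finset.range (n+1), V j with hW
  have hWo : ∀ n, IsOpen (W n) := fun n => isOpen_biInter_finset fun j _ => hVo j
  have hWd : ∀ n, Dense (W n) := by
    intro n
    induction n with
    | zero =>
      have h0 : W 0 = V 0 := by simp [hW]
      rw [h0]; exact hVd 0
    | succ k ihw =>
      have hsucc : W (k+1) = W k ∩ V (k+1) := by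
        ext z
        simp only [hW, mem_iInter, mem_inter_iff, Finset.mem_range]
        constructor
        · intro hz
          exact ⟨fun j hj => hz j (by omega), hz (k+1) (by omega)⟩
        · rintro ⟨hz1, hz2⟩ j hj
          rcases Nat.lt_or_ge j (k+1) with h | h
          · exact hz1 j h
          · have : j = k + 1 := by omega
            rw [this]; exact hz2
      rw [hsucc]
      exact ihw.inter_of_isOpen_left (hVd (k+1)) (hWo k)
  have hWsub : ∀ j k, j ≤ k → W k ⊆ W j := by
    intro j k hjk x hx
    simp only [hW, mem_iInter, Finset.mem_range] at hx ⊢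
    intro i hi
    exact hx i (by omega)
  refine ⟨W, hWo, hWd, hWsub, ?_⟩
  intro x hx hxS
  obtain ⟨t, htT, hxt⟩ := hTS hxS
  have : t ∈ range f := by rw [← hf]; exact mem_insert_of_mem _ htT
  obtain ⟨n, rfl⟩ := this
  have hxV : x ∈ V n := by
    have hm := hx n
    simp only [hW, mem_iInter, Finset.mem_range] at hm
    exact hm n (by omega)
  exact hxV (subset_closure hxt)

/-- Iterated sequence starting at 0. -/
def iterSeq (f : ℕ → ℕ → ℕ) : ℕ → ℕ
  | 0 => 0
  | n+1 => f n (iterSeq f n)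

lemma talagrand {S : Set (ℕ → Bool)}
    (hSF : S.Nonempty ∧ (∀ s ∈ S, {n | s n = true}.Infinite) ∧
      ∀ a ∈ S, ∀ b : ℕ → Bool, {n | b n = true}.Infinite →
        ({n | a n = true} \ {n | b n = true}).Finite → b ∈ S)
    (hM : IsMeagre S) :
    ∃ g : ℕ → ℕ, StrictMono g ∧ ∀ s ∈ S, ∃ m, ∀ n, m ≤ n →
      ∃ k, g n ≤ k ∧ k < g (n+1) ∧ s k = true := by
  classical
  obtain ⟨W, hWo, hWd, hWsub, hWS⟩ := meagre_seq hM
  have step : ∀ n c, ∃ N, c < N ∧ ∃ ρ : ℕ → Bool,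
      ∀ x : ℕ → Bool, (∀ i, c ≤ i → i < N → x i = ρ i) → x ∈ W n :=
    fun n c => dense_step (hWo n) (hWd n) c
  choose Fh hFlt Rh hR using step
  set g : ℕ → ℕ := iterSeq Fh with hgdef
  have hgmono : StrictMono g := strictMono_nat_of_lt_succ fun n => hFlt n (g n)
  set ρf : ℕ → ℕ → Bool := fun k => Rh k (g k) with hρf
  have key : ∀ k (x : ℕ → Bool), (∀ i, g k ≤ i → i < g (k+1) → x i = ρf k i) → x ∈ W k :=
    fun k => hR k (g k)
  refine ⟨g, hgmono, ?_⟩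
  intro s hs
  set K : Set ℕ := {k | ∀ i, g k ≤ i → i < g (k+1) → s i = true → ρf k i = true} with hK
  have huniq : ∀ i k k', g k ≤ i → i < g (k+1) → g k' ≤ i → i < g (k'+1) → k = k' := by
    intro i k k' h1 h2 h3 h4
    rcases lt_trichotomy k k' with h | h | h
    · have h5 : g (k + 1) ≤ i := le_trans (hgmono.monotone (Nat.succ_le_of_lt h)) h3
      omega
    · exact h
    · have h5 : g (k' + 1) ≤ i := le_trans (hgmono.monotone (Nat.succ_le_of_lt h)) h1
      omega
  have hKfin : K.Finite := by
    by_contra hKinf0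
    have hKinf : K.Infinite := hKinf0
    set b : ℕ → Bool := fun i =>
      if h : ∃ k, k ∈ K ∧ g k ≤ i ∧ i < g (k+1) then ρf h.choose i else s i with hb
    have hbs : ∀ i, s i = true → b i = true := by
      intro i hi
      rw [hb]
      dsimp only
      split_ifs with h
      · obtain ⟨hk, h1, h2⟩ := h.choose_spec
        exact hk i h1 h2 hi
      · exact hi
    have hbinK : ∀ k, k ∈ K → ∀ i, g k ≤ i → i < g (k+1) → b i = ρf k i := by
      intro k hk i h1 h2
      have hex : ∃ k', k' ∈ K ∧ g k' ≤ i ∧ i < g (k'+1) := ⟨k, hk, h1, h2⟩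
      rw [hb]
      dsimp only
      rw [dif_pos hex]
      have hspec := hex.choose_spec
      rw [huniq i hex.choose k hspec.2.1 hspec.2.2 h1 h2]
    have hbS : b ∈ S := by
      apply hSF.2.2 s hs b
      · exact (hSF.2.1 s hs).mono (fun i hi => hbs i hi)
      · have hdiff : {n | s n = true} \ {n | b n = true} = ∅ := by
          ext i
          simp only [mem_diff, mem_setOf_eq, mem_empty_iff_false, iff_false, not_and, not_not]
          intro h1
          simp [hbs i h1]
        rw [hdiff]; exact finite_empty
    have hbW : ∀ j, b ∈ W j := by
      intro j
      obtain ⟨k, hkK, hjk⟩ := hKinf.exists_gt j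
      exact hWsub j k (le_of_lt hjk) (key k b (hbinK k hkK))
    exact hWS b hbW hbS
  obtain ⟨mb, hmb⟩ := hKfin.bddAbove
  refine ⟨mb + 1, ?_⟩
  intro n hn
  have hnK : n ∉ K := by
    intro h
    have := hmb h
    omega
  rw [hK, mem_setOf_eq] at hnK
  push_neg at hnK
  obtain ⟨i, h1, h2, h3, _⟩ := hnK
  exact ⟨i, h1, h2, h3⟩

lemma open_fin_step {U : Set (ℕ → Bool)} (hO : IsOpen U)
    (hF : ∀ y : ℕ → Bool, {n | y n = true}.Finite → y ∈ U) (c : ℕ) :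
    ∃ N, c < N ∧ ∀ x : ℕ → Bool, (∀ i, c ≤ i → i < N → x i = false) → x ∈ U := by
  classical
  have key : ∀ v : Fin c → Bool, ∃ N, ∀ z : ℕ → Bool,
      (∀ i < N, z i = (fun i => if h : i < c then v ⟨i, h⟩ else false) i) → z ∈ U := by
    intro v
    apply cyl_mem hO
    apply hF
    have hsub : {n | (fun i => if h : i < c then v ⟨i, h⟩ else false) n = true}
        ⊆ ↑(Finset.range c) := by
      intro n hn
      simp only [mem_setOf_eq] at hn
      by_contra hc
      simp only [Finset.coe_range, mem_Iio, not_lt] at hc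
      rw [dif_neg (not_lt.2 hc)] at hn
      exact Bool.false_ne_true hn
    exact Set.Finite.subset (Finset.range c).finite_toSet hsub
  choose Nv hNv using key
  refine ⟨max (c+1) (Finset.univ.sup Nv),
    lt_of_lt_of_le (Nat.lt_succ_self c) (le_max_left _ _), fun x hx => ?_⟩
  apply hNv (fun j : Fin c => x j)
  intro i hi
  by_cases h : i < c
  · simp [h]
  · simp only [dif_neg h]
    exact hx i (le_of_not_gt h)
      (lt_of_lt_of_le hi (le_trans (Finset.le_sup (f := Nv) (Finset.mem_univ _))
        (le_max_right _ _)))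

lemma isClosed_dep (N : ℕ) (P : (ℕ → Bool) → Prop)
    (h : ∀ x y : ℕ → Bool, (∀ i < N, x i = y i) → P x → P y) : IsClosed {x | P x} := by
  classical
  have hcont : Continuous (fun x : ℕ → Bool => fun i : Fin N => x i) :=
    continuous_pi fun i => continuous_apply _
  have heq : {x | P x} = (fun x : ℕ → Bool => fun i : Fin N => x i) ⁻¹'
      {v : Fin N → Bool | P (fun i => if hi : i < N then v ⟨i, hi⟩ else false)} := by
    ext x
    constructor
    · intro hx
      exact h x _ (fun i hi => by simp [hi]) hx
    · intro hx
      exact h _ x (fun i hi => by simp [hi]) hx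
  rw [heq]
  exact (isClosed_discrete _).preimage hcont

lemma filter_range_eq_of_agree {x y : ℕ → Bool} {N : ℕ} (hxy : ∀ i < N, x i = y i) :
    (Finset.range N).filter (fun i => x i = true)
      = (Finset.range N).filter (fun i => y i = true) := by
  ext i
  simp only [Finset.mem_filter, Finset.mem_range]
  constructor
  · rintro ⟨h1, h2⟩
    exact ⟨h1, by rw [← hxy i h1]; exact h2⟩
  · rintro ⟨h1, h2⟩
    exact ⟨h1, by rw [hxy i h1]; exact h2⟩

lemma empty_interval {h : ℕ → ℕ} (hm : StrictMono h) (x : ℕ → Bool) (k t : ℕ)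
    (hcard : ((Finset.range (h (2*k+2))).filter (fun i => x i = true)).card ≤ k)
    (ht : t ≤ k) : ∃ j, t ≤ j ∧ ∀ i, h j ≤ i → i < h (j+1) → x i = false := by
  classical
  set p : ℕ → Prop := fun j => ∃ i, h j ≤ i ∧ i < h (j+1) ∧ x i = true with hp
  set T := (Finset.range (2*k+2)).filter p with hT
  have hTcard : T.card ≤ k := by
    have hwit : ∀ j, ∃ i, j ∈ T → (h j ≤ i ∧ i < h (j+1) ∧ x i = true) := by
      intro j
      by_cases hj : j ∈ T
      · obtain ⟨i, hi⟩ := (Finset.mem_filter.1 hj).2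
        exact ⟨i, fun _ => hi⟩
      · exact ⟨0, fun h => absurd h hj⟩
    choose w hw using hwit
    refine le_trans (Finset.card_le_card_of_injOn w ?_ ?_) hcard
    · intro j hj
      obtain ⟨h1, h2, h3⟩ := hw j hj
      have hjr : j < 2*k+2 := Finset.mem_range.1 (Finset.mem_filter.1 hj).1
      refine Finset.mem_filter.2 ⟨Finset.mem_range.2 ?_, h3⟩
      exact lt_of_lt_of_le h2 (hm.monotone (by omega))
    · intro j hj j' hj' hww
      obtain ⟨h1, h2, _⟩ := hw j hj
      obtain ⟨h1', h2', _⟩ := hw j' hj'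
      rcases lt_trichotomy j j' with hlt | heq | hlt
      · have : h (j+1) ≤ h j' := hm.monotone (by omega)
        omega
      · exact heq
      · have : h (j'+1) ≤ h j := hm.monotone (by omega)
        omega
  have hEcard : k + 2 ≤ ((Finset.range (2*k+2)).filter (fun j => ¬ p j)).card := by
    have htot := Finset.card_filter_add_card_filter_not
      (s := Finset.range (2*k+2)) (p := p)
    rw [Finset.card_range] at htot
    rw [hT] at hTcard
    omega
  by_contra hcon
  push_neg at hcon
  have hsub : (Finset.range (2*k+2)).filter (fun j => ¬ p j) ⊆ Finset.range t := by
    intro j hj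
    obtain ⟨hjr, hjp⟩ := Finset.mem_filter.1 hj
    refine Finset.mem_range.2 ?_
    by_contra hjt
    obtain ⟨i, hi1, hi2, hi3⟩ := hcon j (by omega)
    exact hjp ⟨i, hi1, hi2, by
      cases hxi : x i
      · exact absurd hxi hi3
      · rfl⟩
  have := Finset.card_le_card hsub
  rw [Finset.card_range] at this
  omega

lemma count_range_strictMono {B : ℕ → ℕ} (hB : StrictMono B) (k : ℕ) :
    Nat.count (fun i => chi (Set.range B) i = true) (B k) = k := by
  classical
  rw [Nat.count_eq_card_filter_range]
  have heq : (Finset.range (B k)).filter (fun i => chi (Set.range B) i = true)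
      = (Finset.range k).image B := by
    ext i
    simp only [Finset.mem_filter, Finset.mem_range, Finset.mem_image, chi,
      decide_eq_true_eq, Set.mem_range]
    constructor
    · rintro ⟨hi, j, rfl⟩
      exact ⟨j, hB.lt_iff_lt.1 hi, rfl⟩
    · rintro ⟨j, hj, rfl⟩
      exact ⟨hB hj, j, rfl⟩
  rw [heq, Finset.card_image_of_injective _ hB.injective, Finset.card_range]

lemma nthE_chi_range {B : ℕ → ℕ} (hB : StrictMono B) (k : ℕ) :
    nthE (chi (Set.range B)) k = B k := by
  classical
  have hpk : chi (Set.range B) (B k) = true := by simp [chi]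
  have hnc := Nat.nth_count (p := fun i => chi (Set.range B) i = true) hpk
  rw [count_range_strictMono hB k] at hnc
  exact hnc

lemma card_le_of_nth_ge {x : ℕ → Bool} (hx : {n | x n = true}.Infinite) {c k : ℕ}
    (hc : c ≤ nthE x k) :
    ((Finset.range c).filter (fun i => x i = true)).card ≤ k := by
  classical
  have hc' : c ≤ Nat.nth (fun i => x i = true) k := hc
  have h1 : Nat.count (fun i => x i = true) c
      ≤ Nat.count (fun i => x i = true) (Nat.nth (fun i => x i = true) k) :=
    Nat.count_monotone _ hc'
  rw [Nat.count_nth_of_infinite hx k] at h1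
  rwa [Nat.count_eq_card_filter_range] at h1

/-- if `X ⊆ [ω]^ω` is meager-unbounded then every `G_δ` set containing
`Fin` contains a σ-compact set `F` with `|X ∖ F| < 𝔟`. -/
theorem stmt16 (X : Set (ℕ → Bool)) (hX : ∀ x ∈ X, {n | x n = true}.Infinite)
    (hMU : MeagerUnbounded X) :
    ∀ G : Set (ℕ → Bool), IsGδ G → FinS ⊆ G →
      ∃ F : Set (ℕ → Bool),
        (∃ C : ℕ → Set (ℕ → Bool), (∀ n, IsCompact (C n)) ∧ F = ⋃ n, C n) ∧
        F ⊆ G ∧ Cardinal.mk ↥(X \ F) < bNumber := by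
  intro G hG hFinG
  classical
  obtain ⟨T, hTo, hTc, hTeq⟩ := hG
  obtain ⟨f, hf⟩ := (hTc.insert Set.univ).exists_eq_range (insert_nonempty _ _)
  have hGeq : G = ⋂ n, f n := by
    rw [hTeq, ← sInter_range, ← hf, sInter_insert, univ_inter]
  have hfo : ∀ n, IsOpen (f n) := by
    intro n
    have hmem : f n ∈ insert Set.univ T := hf ▸ mem_range_self n
    rcases hmem with h | h
    · rw [h]; exact isOpen_univ
    · exact hTo _ h
  have hGsub : ∀ n, G ⊆ f n := by
    intro n
    rw [hGeq]
    exact iInter_subset _ n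
  set U : ℕ → Set (ℕ → Bool) := fun n => ⋂ j ∈ Finset.range (n+1), f j with hU
  have hUo : ∀ n, IsOpen (U n) := fun n => isOpen_biInter_finset fun j _ => hfo j
  have hUF : ∀ n, ∀ y : ℕ → Bool, {i | y i = true}.Finite → y ∈ U n := by
    intro n y hy
    simp only [hU, mem_iInter]
    intro j _
    exact hGsub j (hFinG hy)
  have hUsub : ∀ t n, t ≤ n → U n ⊆ f t := by
    intro t n htn y hy
    simp only [hU, mem_iInter, Finset.mem_range] at hy
    exact hy t (by omega)
  have step : ∀ n c, ∃ N, c < N ∧ ∀ x : ℕ → Bool,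
      (∀ i, c ≤ i → i < N → x i = false) → x ∈ U n :=
    fun n c => open_fin_step (hUo n) (hUF n) c
  choose Fh hFlt hFprop using step
  set h : ℕ → ℕ := iterSeq Fh with hhdef
  have hhmono : StrictMono h := strictMono_nat_of_lt_succ fun n => hFlt n (h n)
  have hhprop : ∀ n (x : ℕ → Bool), (∀ i, h n ≤ i → i < h (n+1) → x i = false) → x ∈ U n :=
    fun n => hFprop n (h n)
  have hBmono : StrictMono (fun k => h (2*k+2)) := fun a b hab => hhmono (by omega)
  set b : ℕ → Bool := chi (Set.range (fun k => h (2*k+2))) with hb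
  have hbinf : {n | b n = true}.Infinite := by
    have hbeq : {n | b n = true} = Set.range (fun k => h (2*k+2)) := by
      ext i
      simp [hb, chi]
    rw [hbeq]
    exact Set.infinite_range_of_injective hBmono.injective
  obtain ⟨S, hSF, hSM, A, hAX, hAcard, hAmem⟩ := hMU.2 b hbinf
  obtain ⟨g, hgmono, hgS⟩ := talagrand ⟨hSF.1, hSF.2.1, hSF.2.2⟩ hSM
  set C : ℕ → Set (ℕ → Bool) := fun m => {x | ∀ n, m ≤ n → ∃ k, g n ≤ k ∧ k < g (n+1) ∧
    ((Finset.range (h (2*k+2))).filter (fun i => x i = true)).card ≤ k} with hC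
  have hCclosed : ∀ m, IsClosed (C m) := by
    intro m
    have hCeq : C m = ⋂ n, {x : ℕ → Bool | m ≤ n → ∃ k, g n ≤ k ∧ k < g (n+1) ∧
        ((Finset.range (h (2*k+2))).filter (fun i => x i = true)).card ≤ k} := by
      ext x
      simp only [hC, mem_setOf_eq, mem_iInter]
    rw [hCeq]
    refine isClosed_iInter fun n => ?_
    by_cases hmn : m ≤ n
    · simp only [hmn, true_implies]
      have hun : {x : ℕ → Bool | ∃ k, g n ≤ k ∧ k < g (n+1) ∧
          ((Finset.range (h (2*k+2))).filter (fun i => x i = true)).card ≤ k}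
          = ⋃ k ∈ Finset.Ico (g n) (g (n+1)), {x : ℕ → Bool |
            ((Finset.range (h (2*k+2))).filter (fun i => x i = true)).card ≤ k} := by
        ext x
        simp only [mem_setOf_eq, mem_iUnion, Finset.mem_Ico, exists_prop]
        constructor
        · rintro ⟨k, h1, h2, h3⟩
          exact ⟨k, ⟨h1, h2⟩, h3⟩
        · rintro ⟨k, ⟨h1, h2⟩, h3⟩
          exact ⟨k, h1, h2, h3⟩
      rw [hun]
      refine Set.Finite.isClosed_biUnion (Finset.finite_toSet _) fun k _ => ?_
      refine isClosed_dep (h (2*k+2)) _ ?_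
      intro x y hxy hx
      rwa [← filter_range_eq_of_agree hxy]
    · have : {x : ℕ → Bool | m ≤ n → ∃ k, g n ≤ k ∧ k < g (n+1) ∧
          ((Finset.range (h (2*k+2))).filter (fun i => x i = true)).card ≤ k} = Set.univ := by
        ext x
        simp only [mem_setOf_eq, mem_univ, iff_true]
        intro hcon
        exact absurd hcon hmn
      rw [this]
      exact isClosed_univ
  have hFsubG : (⋃ m, C m) ⊆ G := by
    intro x hx
    obtain ⟨m, hm⟩ := mem_iUnion.1 hx
    rw [hGeq]
    refine mem_iInter.2 fun t => ?_
    simp only [hC, mem_setOf_eq] at hm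
    obtain ⟨k, hk1, hk2, hk3⟩ := hm (max m t) (le_max_left _ _)
    have hkt : t ≤ k := le_trans (le_trans (le_max_right m t) hgmono.le_apply) hk1
    obtain ⟨j, hj1, hj2⟩ := empty_interval hhmono x k t hk3 hkt
    exact hUsub t j hj1 (hhprop j x hj2)
  have hXF : X \ (⋃ m, C m) ⊆ A := by
    intro x hx
    by_contra hxA
    obtain ⟨hxX, hxF⟩ := hx
    have hsx := hAmem x ⟨hxX, hxA⟩
    obtain ⟨m, hm⟩ := hgS _ hsx
    apply hxF
    refine mem_iUnion.2 ⟨m, ?_⟩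
    simp only [hC, mem_setOf_eq]
    intro n hn
    obtain ⟨k, hk1, hk2, hk3⟩ := hm n hn
    refine ⟨k, hk1, hk2, ?_⟩
    have hle : nthE b k ≤ nthE x k := by
      simpa [chi] using hk3
    have hbk : nthE b k = h (2*k+2) := by
      rw [hb]
      exact nthE_chi_range hBmono k
    rw [hbk] at hle
    exact card_le_of_nth_ge (hX x hxX) hle
  refine ⟨⋃ m, C m, ⟨C, fun m => (hCclosed m).isCompact, rfl⟩, hFsubG, ?_⟩
  exact lt_of_le_of_lt (Cardinal.mk_le_mk_of_subset hXF) hAcard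
end
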